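/- (Lemma of Section 7: the optimal coefficient matrix minimizes φ over the discrete set of coefficient matrices.) Let x̂ ∈ 𝒴^n be a minimizer over y^n ∈ 𝒴^n of the energy 𝓔(y^n) = H(m(y^n)) + α·d_n(x^n,y^n), and assume every entry of m(x̂) is strictly positive. For a |𝒴|×|𝒴|^k matrix m with strictly positive entries let Λ(m) be the matrix with entries log((Σ_{β'∈𝒴} m_{β',b})/m_{β,b}), and define φ(Λ) = min_{z^n∈𝒴^n} [ Σ_{β,b} Λ_{β,b}·m_{β,b}(z^n) + α·d_n(x^n,z^n) ]. Then φ(Λ(m(x̂))) = 𝓔(x̂), and for every y^n ∈ 𝒴^n such that every entry of m(y^n) is strictly positive, φ(Λ(m(y^n))) ≥ φ(Λ(m(x̂))). -/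

import Mathlib

/-- The entropy `𝓗(v)` of the (unnormalized) nonnegative vector `v`:
`𝓗(v) = ∑ i, (v i / ‖v‖₁) * log (‖v‖₁ / v i)` if `v ≠ 0`, and `𝓗(0) = 0`,
where for a vector with nonnegative components `‖v‖₁ = ∑ i, v i`. -/
noncomputable def vecEnt {ι : Type*} [Fintype ι] (v : ι → ℝ) : ℝ :=
  @ite ℝ (v = 0) (Classical.propDecidable _) 0
    (∑ i, (v i / ∑ j, v j) * Real.log ((∑ j, v j) / v i))

/-- Conditional empirical entropy of a `|𝒴| × |𝒴|^k` matrix `m` with nonnegative entries: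
`H(m) = ∑_{b ∈ 𝒴^k} (∑_{β ∈ 𝒴} m_{β,b}) ⬝ 𝓗(m_{·,b})`. -/
noncomputable def condEnt {Y : Type*} [Fintype Y] {k : ℕ} (m : Y → (Fin k → Y) → ℝ) : ℝ :=
  ∑ b : Fin k → Y, (∑ β : Y, m β b) * vecEnt (fun β => m β b)

/-- The `(k+1)`-th order empirical count matrix of a cyclic sequence `y` of length `n`:
`m_{β,b}(y^n) = (1/n)·|{1 ≤ i ≤ n : (y_{i−k},…,y_{i−1}) = b and y_i = β}|`,
with indices taken cyclically (modulo `n`). -/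
noncomputable def empM {Y : Type*} [Fintype Y] [DecidableEq Y] (n k : ℕ) [NeZero n]
    (y : ZMod n → Y) (β : Y) (b : Fin k → Y) : ℝ :=
  ((Finset.univ.filter (fun i : ZMod n =>
      y i = β ∧ ∀ j : Fin k, y (i - (k : ZMod n) + ((j : ℕ) : ZMod n)) = b j)).card : ℝ) / n

/-- Average per-letter distortion `d_n(x^n, y^n) = (1/n) ∑_{i=1}^n d(x_i, y_i)`. -/
noncomputable def distn {X Y : Type*} (n : ℕ) [NeZero n] (d : X → Y → ℝ)
    (x : ZMod n → X) (y : ZMod n → Y) : ℝ :=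
  (∑ i : ZMod n, d (x i) (y i)) / n

/-- The energy (cost of problem (P1)): `𝓔(y^n) = H(m(y^n)) + α·d_n(x^n, y^n)`. -/
noncomputable def energy {X Y : Type*} [Fintype Y] [DecidableEq Y] (n k : ℕ) [NeZero n]
    (x : ZMod n → X) (α : ℝ) (d : X → Y → ℝ) (y : ZMod n → Y) : ℝ :=
  condEnt (fun β b => empM n k y β b) + α * distn n d x y

/-- The linearized cost (problem (P2)):
`∑_{β,b} λ_{β,b}·m_{β,b}(y^n) + α·d_n(x^n, y^n)`. -/
noncomputable def linCost {X Y : Type*} [Fintype Y] [DecidableEq Y] (n k : ℕ) [NeZero n]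
    (x : ZMod n → X) (α : ℝ) (d : X → Y → ℝ) (lam : Y → (Fin k → Y) → ℝ)
    (y : ZMod n → Y) : ℝ :=
  (∑ β : Y, ∑ b : Fin k → Y, lam β b * empM n k y β b) + α * distn n d x y

/-- The coefficient matrix `Λ(q)` of a positive matrix `q`:
`λ_{β,b} = log((∑_{β'} q_{β',b}) / q_{β,b})`. -/
noncomputable def lamOf {Y : Type*} [Fintype Y] {k : ℕ}
    (q : Y → (Fin k → Y) → ℝ) (β : Y) (b : Fin k → Y) : ℝ :=
  Real.log ((∑ β' : Y, q β' b) / q β b)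

/-- `φ(Λ) = min_{z^n ∈ 𝒴^n} [ ∑_{β,b} Λ_{β,b}·m_{β,b}(z^n) + α·d_n(x^n,z^n) ]`. -/
noncomputable def phi {X Y : Type*} [Fintype Y] [DecidableEq Y] (n k : ℕ) [NeZero n]
    (x : ZMod n → X) (α : ℝ) (d : X → Y → ℝ) (lam : Y → (Fin k → Y) → ℝ) : ℝ :=
  ⨅ z : ZMod n → Y, linCost n k x α d lam z

/-!
By Gibbs' inequality, for every positive matrix `q` the conditional entropy `H(m)` of a
nonnegative matrix `m` is at most the linear form `∑ Λ(q)_{β,b} m_{β,b}`, with equality when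
`q = m`. Hence `𝓔(z) ≤ linCost(Λ(q), z)` for all `z`, so `φ(Λ(q)) ≥ min 𝓔 = 𝓔(x̂)`, while
evaluating the linear cost of `Λ(m(x̂))` at `x̂` itself gives `φ(Λ(m(x̂))) ≤ 𝓔(x̂)`.
-/

open Real Finset

lemma mul_log_div_le_sub {a c : ℝ} (ha : 0 ≤ a) (hc : 0 < c) : a * log (c / a) ≤ c - a := by
  rcases ha.eq_or_lt with rfl | ha
  · simpa using hc.le
  calc a * log (c / a) ≤ a * (c / a - 1) :=
        mul_le_mul_of_nonneg_left (log_le_sub_one_of_pos (div_pos hc ha)) ha.le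
    _ = c - a := by field_simp

lemma sum_mul_vecEnt {ι : Type*} [Fintype ι] (p : ι → ℝ) :
    (∑ i, p i) * vecEnt p = ∑ i, p i * log ((∑ j, p j) / p i) := by
  by_cases hp : p = 0
  · simp [hp, vecEnt]
  by_cases hS : ∑ j, p j = 0
  · simp [hS]
  rw [vecEnt, if_neg hp, mul_sum]
  refine sum_congr rfl fun i _ => ?_
  field_simp

/-- Gibbs' inequality, for unnormalized weights. -/
theorem sum_mul_log_sum_div_le {ι : Type*} [Fintype ι] (p q : ι → ℝ)
    (hp : ∀ i, 0 ≤ p i) (hq : ∀ i, 0 < q i) :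
    ∑ i, p i * log ((∑ j, p j) / p i) ≤ ∑ i, p i * log ((∑ j, q j) / q i) := by
  rcases isEmpty_or_nonempty ι with hι | hι
  · simp
  set S := ∑ j, p j
  set T := ∑ j, q j
  have hT : 0 < T := sum_pos (fun i _ => hq i) univ_nonempty
  -- The slack terms `S q_i / T - p_i` sum to `S - S = 0`.
  have term : ∀ i, p i * log (S / p i) ≤ p i * log (T / q i) + (S * q i / T - p i) := by
    intro i
    have hqi := hq i
    rcases (hp i).eq_or_lt with h | h
    · have hS : 0 ≤ S := sum_nonneg fun j _ => hp j
      rw [← h]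
      simpa using div_nonneg (mul_nonneg hS hqi.le) hT.le
    have hS : 0 < S := h.trans_le (single_le_sum (fun j _ => hp j) (mem_univ i))
    have hsplit : S / p i = (S * q i / T / p i) * (T / q i) := by
      field_simp
    rw [hsplit, log_mul (by positivity) (by positivity), mul_add]
    linarith [mul_log_div_le_sub h.le (show 0 < S * q i / T by positivity)]
  calc ∑ i, p i * log (S / p i)
      ≤ ∑ i, (p i * log (T / q i) + (S * q i / T - p i)) := sum_le_sum fun i _ => term i
    _ = ∑ i, p i * log (T / q i) := by
      rw [sum_add_distrib, sum_sub_distrib, ← sum_div, ← mul_sum,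
        mul_div_cancel_right₀ _ hT.ne', sub_self, add_zero]

section CondEnt

variable {Y : Type*} [Fintype Y] {k : ℕ}

lemma condEnt_eq_sum_lamOf_mul (m : Y → (Fin k → Y) → ℝ) :
    condEnt m = ∑ β, ∑ b, lamOf m β b * m β b := by
  rw [condEnt, sum_comm]
  refine sum_congr rfl fun b _ => ?_
  simp only [sum_mul_vecEnt (fun β => m β b), lamOf, mul_comm]

lemma condEnt_le_sum_lamOf_mul (m q : Y → (Fin k → Y) → ℝ)
    (hm : ∀ β b, 0 ≤ m β b) (hq : ∀ β b, 0 < q β b) :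
    condEnt m ≤ ∑ β, ∑ b, lamOf q β b * m β b := by
  rw [condEnt, sum_comm]
  refine sum_le_sum fun b _ => ?_
  rw [sum_mul_vecEnt (fun β => m β b)]
  simpa only [lamOf, mul_comm] using
    sum_mul_log_sum_div_le (fun β => m β b) (fun β => q β b) (hm · b) (hq · b)

end CondEnt

section Energy

variable {X Y : Type*} [Fintype Y] [DecidableEq Y] (n k : ℕ) [NeZero n]
  (x : ZMod n → X) (α : ℝ) (d : X → Y → ℝ)

lemma empM_nonneg (y : ZMod n → Y) (β : Y) (b : Fin k → Y) : 0 ≤ empM n k y β b := by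
  unfold empM
  positivity

lemma energy_le_linCost_lamOf {q : Y → (Fin k → Y) → ℝ} (hq : ∀ β b, 0 < q β b)
    (z : ZMod n → Y) : energy n k x α d z ≤ linCost n k x α d (lamOf q) z :=
  add_le_add_left (condEnt_le_sum_lamOf_mul _ q (empM_nonneg n k z) hq) _

lemma linCost_lamOf_empM_self (z : ZMod n → Y) :
    linCost n k x α d (lamOf (empM n k z)) z = energy n k x α d z := by
  rw [linCost, energy, condEnt_eq_sum_lamOf_mul]

lemma phi_le_linCost (lam : Y → (Fin k → Y) → ℝ) (z : ZMod n → Y) :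
    phi n k x α d lam ≤ linCost n k x α d lam z :=
  ciInf_le (Set.finite_range _).bddBelow z

lemma energy_le_phi_lamOf {xhat : ZMod n → Y}
    (hmin : ∀ y, energy n k x α d xhat ≤ energy n k x α d y)
    {q : Y → (Fin k → Y) → ℝ} (hq : ∀ β b, 0 < q β b) :
    energy n k x α d xhat ≤ phi n k x α d (lamOf q) :=
  have : Nonempty (ZMod n → Y) := ⟨xhat⟩
  le_ciInf fun z => (hmin z).trans (energy_le_linCost_lamOf n k x α d hq z)

end Energy

theorem stmt11_general {X Y : Type*} [Fintype Y] [DecidableEq Y]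
    (n k : ℕ) [NeZero n]
    (x : ZMod n → X) (α : ℝ)
    (d : X → Y → ℝ)
    (xhat : ZMod n → Y)
    (hmin : ∀ y : ZMod n → Y, energy n k x α d xhat ≤ energy n k x α d y)
    (hpos : ∀ (β : Y) (b : Fin k → Y), 0 < empM n k xhat β b) :
    phi n k x α d (lamOf (empM n k xhat)) = energy n k x α d xhat ∧
      ∀ y : ZMod n → Y, (∀ (β : Y) (b : Fin k → Y), 0 < empM n k y β b) →
        phi n k x α d (lamOf (empM n k xhat)) ≤ phi n k x α d (lamOf (empM n k y)) := by
  have upper : phi n k x α d (lamOf (empM n k xhat)) ≤ energy n k x α d xhat :=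
    linCost_lamOf_empM_self n k x α d xhat ▸ phi_le_linCost n k x α d _ xhat
  have heq := upper.antisymm (energy_le_phi_lamOf n k x α d hmin hpos)
  exact ⟨heq, fun y hy => heq ▸ energy_le_phi_lamOf n k x α d hmin hy⟩

/-- Lemma of Section 7: if `x̂` minimizes the energy and `m(x̂)` is strictly
positive, then `φ(Λ(m(x̂))) = 𝓔(x̂)`, and `Λ(m(x̂))` minimizes `φ` over the discrete set of
coefficient matrices derived from sequences. -/
theorem stmt11 {X Y : Type*} [Fintype X] [Fintype Y] [Nonempty X] [Nonempty Y] [DecidableEq Y]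
    (n k : ℕ) [NeZero n] (hk : 0 < k)
    (x : ZMod n → X) (α : ℝ) (hα : 0 ≤ α)
    (d : X → Y → ℝ) (hd : ∀ a b, 0 ≤ d a b)
    (xhat : ZMod n → Y)
    (hmin : ∀ y : ZMod n → Y, energy n k x α d xhat ≤ energy n k x α d y)
    (hpos : ∀ (β : Y) (b : Fin k → Y), 0 < empM n k xhat β b) :
    phi n k x α d (lamOf (empM n k xhat)) = energy n k x α d xhat ∧
      ∀ y : ZMod n → Y, (∀ (β : Y) (b : Fin k → Y), 0 < empM n k y β b) →
        phi n k x α d (lamOf (empM n k xhat)) ≤ phi n k x α d (lamOf (empM n k y)) :=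
  stmt11_general n k x α d xhat hmin hpos
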